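/- arXiv:1505.02238 — 4 statements merged into one kernel-verified Lean document; each statement's English description precedes it below -/
import Mathlib

section
/- Let λ be a unit in R and l a positive integer. If the left ideal ⟨x^l − λ⟩_l is a two-sided ideal of R[x,y;ρ,θ], then ρ^l = id_R and ρ(λ) = λ. -/
open Finsupp

namespace SkewBivar

variable {R : Type*} [CommRing R]

/-- The ring automorphism `ρ^i θ^j` attached to the monomial exponent `(i,j)`. -/
def σ (ρ θ : RingAut R) (p : ℕ × ℕ) : RingAut R := ρ ^ p.1 * θ ^ p.2

theorem σ_zero (ρ θ : RingAut R) : σ ρ θ 0 = 1 := by simp [σ]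

theorem σ_add (ρ θ : RingAut R) (hc : Commute ρ θ) (p q : ℕ × ℕ) :
    σ ρ θ (p + q) = σ ρ θ p * σ ρ θ q := by
  simp only [σ, Prod.fst_add, Prod.snd_add, pow_add]
  conv_rhs => rw [mul_assoc, ← mul_assoc (θ ^ p.2), (hc.symm.pow_pow p.2 q.1).eq, mul_assoc]
  rw [mul_assoc]

/-- Twisted convolution on finitely supported functions `ℕ × ℕ →₀ R`. -/
noncomputable def skmul (ρ θ : RingAut R) (f g : (ℕ × ℕ) →₀ R) : (ℕ × ℕ) →₀ R :=
  f.sum fun a r => g.sum fun b s => Finsupp.single (a + b) (r * σ ρ θ a s)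

variable (ρ θ : RingAut R)

theorem zero_skmul (g : (ℕ × ℕ) →₀ R) : skmul ρ θ 0 g = 0 := by
  simp [skmul]

theorem skmul_zero (f : (ℕ × ℕ) →₀ R) : skmul ρ θ f 0 = 0 := by
  simp [skmul]

theorem add_skmul (f₁ f₂ g : (ℕ × ℕ) →₀ R) :
    skmul ρ θ (f₁ + f₂) g = skmul ρ θ f₁ g + skmul ρ θ f₂ g := by
  unfold skmul
  rw [Finsupp.sum_add_index']
  · intro a
    simp
  · intro a r₁ r₂
    rw [← Finsupp.sum_add]
    congr 1
    ext b s
    rw [add_mul, Finsupp.single_add]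

theorem skmul_add (f g₁ g₂ : (ℕ × ℕ) →₀ R) :
    skmul ρ θ f (g₁ + g₂) = skmul ρ θ f g₁ + skmul ρ θ f g₂ := by
  unfold skmul
  rw [← Finsupp.sum_add]
  congr 1
  ext a r
  rw [Finsupp.sum_add_index']
  · intro b; simp
  · intro b s₁ s₂
    rw [map_add, mul_add, Finsupp.single_add]

theorem single_skmul_single (a b : ℕ × ℕ) (r s : R) :
    skmul ρ θ (Finsupp.single a r) (Finsupp.single b s)
      = Finsupp.single (a + b) (r * σ ρ θ a s) := by
  unfold skmul
  rw [Finsupp.sum_single_index, Finsupp.sum_single_index]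
  · simp
  · rw [Finsupp.sum_single_index] <;> simp

theorem one_skmul (f : (ℕ × ℕ) →₀ R) : skmul ρ θ (Finsupp.single 0 1) f = f := by
  unfold skmul
  rw [Finsupp.sum_single_index]
  · simp only [σ_zero, zero_add, one_mul]
    exact Finsupp.sum_single f
  · simp

theorem skmul_one (f : (ℕ × ℕ) →₀ R) : skmul ρ θ f (Finsupp.single 0 1) = f := by
  unfold skmul
  conv_rhs => rw [← f.sum_single]
  congr 1
  ext a r
  rw [Finsupp.sum_single_index] <;> simp

theorem skmul_assoc (hc : Commute ρ θ) (f g h : (ℕ × ℕ) →₀ R) :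
    skmul ρ θ (skmul ρ θ f g) h = skmul ρ θ f (skmul ρ θ g h) := by
  induction f using Finsupp.induction generalizing g h with
  | zero => simp [zero_skmul]
  | single_add a r f' _ _ ihf =>
    rw [add_skmul, add_skmul, add_skmul, ihf]
    congr 1
    induction g using Finsupp.induction generalizing h with
    | zero => simp [zero_skmul, skmul_zero]
    | single_add b s g' _ _ ihg =>
      rw [skmul_add, add_skmul, add_skmul, skmul_add, ihg]
      congr 1
      induction h using Finsupp.induction with
      | zero => simp [skmul_zero]
      | single_add c t h' _ _ ihh =>
        rw [skmul_add, skmul_add, skmul_add, ihh]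
        congr 1
        rw [single_skmul_single, single_skmul_single, single_skmul_single,
          single_skmul_single, σ_add ρ θ hc, add_assoc]
        rw [map_mul, ← mul_assoc]
        rfl

/-- The bivariate skew polynomial ring `R[x,y;ρ,θ]`, realized as finitely supported
functions on exponent pairs, with the twisted convolution product. -/
def _root_.SkewPoly (R : Type*) [CommRing R] (ρ θ : RingAut R) : Type _ := (ℕ × ℕ) →₀ R

noncomputable instance : AddCommGroup (SkewPoly R ρ θ) :=
  inferInstanceAs (AddCommGroup ((ℕ × ℕ) →₀ R))

noncomputable instance [Fact (Commute ρ θ)] : Ring (SkewPoly R ρ θ) where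
  __ := (inferInstanceAs (AddCommGroup ((ℕ × ℕ) →₀ R)) : AddCommGroup ((ℕ × ℕ) →₀ R))
  mul f g := skmul ρ θ f g
  one := Finsupp.single 0 1
  mul_assoc f g h := skmul_assoc ρ θ Fact.out f g h
  one_mul := one_skmul ρ θ
  mul_one := skmul_one ρ θ
  left_distrib := skmul_add ρ θ
  right_distrib f g h := add_skmul ρ θ f g h
  zero_mul := zero_skmul ρ θ
  mul_zero := skmul_zero ρ θ

end SkewBivar

namespace SkewPoly

open SkewBivar

variable {R : Type*} [CommRing R] {ρ θ : RingAut R}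

/-- The monomial `a·x^i·y^j` of `R[x,y;ρ,θ]`. -/
noncomputable def monomial (ρ θ : RingAut R) (i j : ℕ) (a : R) : SkewPoly R ρ θ :=
  Finsupp.single (i, j) a

/-- The coefficient of `x^p.1·y^p.2` in a bivariate skew polynomial. -/
def coeff (f : SkewPoly R ρ θ) (p : ℕ × ℕ) : R :=
  (show (ℕ × ℕ) →₀ R from f) p

theorem mul_def [Fact (Commute ρ θ)] (f g : SkewPoly R ρ θ) :
    f * g = skmul ρ θ f g := rfl

theorem monomial_mul_monomial [Fact (Commute ρ θ)] (i j k t : ℕ) (a b : R) :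
    monomial ρ θ i j a * monomial ρ θ k t b
      = monomial ρ θ (i + k) (j + t) (a * (σ ρ θ (i, j)) b) := by
  show skmul ρ θ (Finsupp.single (i, j) a) (Finsupp.single (k, t) b) = _
  rw [single_skmul_single]
  rfl

/-- A nonzero bivariate skew polynomial has quasi-degree `(k,t)` if its `(k,t)` coefficient
is nonzero while every coefficient `(i,j)` with `(i,j) → (k,t)` (i.e. `j > t`, or `j = t` and
`i > k`) vanishes. -/
def HasQuasiDeg (f : SkewPoly R ρ θ) (k t : ℕ) : Prop :=
  coeff f (k, t) ≠ 0 ∧ ∀ i j : ℕ, (t < j ∨ (j = t ∧ k < i)) → coeff f (i, j) = 0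

/-- A bivariate skew polynomial is monic if its leading coefficient is `1`. -/
def Monic (f : SkewPoly R ρ θ) : Prop :=
  ∃ k t : ℕ, HasQuasiDeg f k t ∧ coeff f (k, t) = 1

/-- A left ideal that is in fact a two-sided ideal. -/
def IsTwoSidedIdeal [Fact (Commute ρ θ)] (I : Ideal (SkewPoly R ρ θ)) : Prop :=
  ∀ a ∈ I, ∀ b : SkewPoly R ρ θ, a * b ∈ I

theorem skmul_single_apply (f : (ℕ × ℕ) →₀ R) (b : ℕ × ℕ) (s : R) (a : ℕ × ℕ) :
    (SkewBivar.skmul ρ θ f (Finsupp.single b s)) (a + b) = f a * SkewBivar.σ ρ θ a s := by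
  unfold SkewBivar.skmul
  rw [Finsupp.sum_apply]
  have step : (f.sum fun a' r =>
      ((Finsupp.single b s).sum fun b' s' =>
        Finsupp.single (a' + b') (r * SkewBivar.σ ρ θ a' s')) (a + b))
      = ∑ a' ∈ f.support, if a' = a then f a' * SkewBivar.σ ρ θ a' s else 0 := by
    apply Finset.sum_congr rfl
    intro a' _
    show ((Finsupp.single b s).sum fun b' s' =>
        Finsupp.single (a' + b') (f a' * SkewBivar.σ ρ θ a' s')) (a + b) = _
    rw [Finsupp.sum_single_index (by simp), Finsupp.single_apply]
    simp only [add_left_inj]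
  rw [step, Finset.sum_ite_eq' f.support a (fun a' => f a' * SkewBivar.σ ρ θ a' s)]
  split
  · rfl
  · rename_i h
    rw [Finsupp.notMem_support_iff.mp h, zero_mul]

theorem σ_x_apply (i : ℕ) (b : R) : SkewBivar.σ ρ θ (i, 0) b = (ρ ^ i) b := by
  simp [SkewBivar.σ]

theorem σ_zero_apply (b : R) : SkewBivar.σ ρ θ 0 b = b := rfl

theorem one_apply' (b : R) : (1 : RingAut R) b = b := rfl

theorem coeff_mul_monomial [Fact (Commute ρ θ)] (f : SkewPoly R ρ θ) (i j : ℕ) (s : R)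
    (a : ℕ × ℕ) :
    coeff (f * monomial ρ θ i j s) (a + (i, j)) = coeff f a * SkewBivar.σ ρ θ a s :=
  skmul_single_apply f (i, j) s a

theorem coeff_sub [Fact (Commute ρ θ)] (f g : SkewPoly R ρ θ) (p : ℕ × ℕ) :
    coeff (f - g) p = coeff f p - coeff g p :=
  Finsupp.sub_apply (show (ℕ × ℕ) →₀ R from f) (show (ℕ × ℕ) →₀ R from g) p

/-- The only constant in the left ideal generated by `x^l - λ` (for `λ` a unit, `l > 0`)
is zero. -/
theorem const_eq_zero_of_mem {lam : Rˣ} {l : ℕ} (hl : 0 < l) [Fact (Commute ρ θ)] (c : R)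
    (hc : monomial ρ θ 0 0 c ∈
      Ideal.span {monomial ρ θ l 0 1 - monomial ρ θ 0 0 (lam : R)}) : c = 0 := by
  obtain ⟨f, hf⟩ := Ideal.mem_span_singleton'.mp hc
  rw [mul_sub] at hf
  by_cases hf0 : f = 0
  · rw [hf0, zero_mul, zero_mul] at hf
    erw [sub_zero] at hf
    have := congrArg (fun x : SkewPoly R ρ θ => coeff x (0, 0)) hf.symm
    simp [coeff, monomial, Finsupp.single_eq_same] at this
    exact this
  · exfalso
    have hF : (show (ℕ × ℕ) →₀ R from f) ≠ 0 := hf0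
    have hne : (show (ℕ × ℕ) →₀ R from f).support.Nonempty :=
      Finsupp.support_nonempty_iff.mpr hF
    set F := (show (ℕ × ℕ) →₀ R from f) with hFdef
    set S : Finset (ℕ ×ₗ ℕ) := F.support.image (fun p => toLex (p.2, p.1)) with hS
    have hSne : S.Nonempty := hne.image _
    obtain ⟨a, ha, hmax⟩ :
        ∃ a ∈ F.support, toLex (a.2, a.1) = S.max' hSne := by
      obtain ⟨a, ha, heq⟩ := Finset.mem_image.mp (S.max'_mem hSne)
      exact ⟨a, ha, heq⟩
    have htop : F (a + (l, 0)) = 0 := by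
      by_contra hne0
      have hmem : toLex ((a + (l, 0)).2, (a + (l, 0)).1) ∈ S :=
        Finset.mem_image_of_mem _ (Finsupp.mem_support_iff.mpr hne0)
      have hle := S.le_max' _ hmem
      rw [← hmax] at hle
      have : toLex (a.2, a.1) < toLex ((a + (l, 0)).2, (a + (l, 0)).1) := by
        rw [Prod.Lex.lt_iff]
        right
        exact ⟨by simp, by simpa using hl⟩
      exact absurd hle (not_le.mpr this)
    have hcoeff := congrArg (fun x : SkewPoly R ρ θ => coeff x (a + (l, 0))) hf
    simp only [coeff_sub] at hcoeff
    have e1 : coeff (f * monomial ρ θ l 0 1) (a + (l, 0)) = coeff f a := by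
      rw [coeff_mul_monomial, map_one, mul_one]
    have e2 : coeff (f * monomial ρ θ 0 0 (lam : R)) (a + (l, 0)) = 0 := by
      have : a + (l, 0) = (a + (l, 0)) + ((0 : ℕ), (0 : ℕ)) := by simp
      rw [this, coeff_mul_monomial]
      have : coeff f (a + (l, 0)) = 0 := htop
      rw [this, zero_mul]
    have e3 : coeff (monomial ρ θ 0 0 c) (a + (l, 0)) = 0 := by
      have hne' : a + ((l : ℕ), (0 : ℕ)) ≠ ((0 : ℕ), (0 : ℕ)) := by
        intro h
        have : a.1 + l = 0 := congrArg Prod.fst h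
        omega
      exact Finsupp.single_eq_of_ne hne'
    rw [e1, e2, e3, sub_zero] at hcoeff
    exact (Finsupp.mem_support_iff.mp ha) hcoeff

end SkewPoly

open SkewPoly in
/-- If `⟨x^l − λ⟩_l` is a two-sided ideal of `R[x,y;ρ,θ]` for a unit `λ`,
then `ρ^l = id` and `ρ(λ) = λ`. -/
theorem SkewPoly.of_isTwoSidedIdeal_span_Xl_sub
    {R : Type*} [CommRing R] (ρ θ : RingAut R) [Fact (Commute ρ θ)]
    (lam : Rˣ) (l : ℕ) (hl : 0 < l)
    (h2 : IsTwoSidedIdeal (Ideal.span {monomial ρ θ l 0 1 - monomial ρ θ 0 0 (lam : R)})) :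
    ρ ^ l = 1 ∧ ρ (lam : R) = (lam : R) := by
  set g : SkewPoly R ρ θ := monomial ρ θ l 0 1 - monomial ρ θ 0 0 (lam : R) with hg
  set I : Ideal (SkewPoly R ρ θ) := Ideal.span {g} with hI
  have hgI : g ∈ I := Ideal.subset_span (Set.mem_singleton _)
  have monomial_sub : ∀ (i j : ℕ) (a b : R),
      monomial ρ θ i j a - monomial ρ θ i j b = monomial ρ θ i j (a - b) := by
    intro i j a b
    exact (Finsupp.single_sub (i, j) a b).symm
  have prodg : ∀ (i j : ℕ) (r : R), monomial ρ θ i j r * g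
      = monomial ρ θ (i + l) j r - monomial ρ θ i j (r * SkewBivar.σ ρ θ (i, j) (lam : R)) := by
    intro i j r
    rw [hg, mul_sub, monomial_mul_monomial, monomial_mul_monomial]
    simp
  -- `ρ^l = 1`
  have key : ∀ r : R, (ρ ^ l) r * (lam : R) = (lam : R) * r := by
    intro r
    have h1 : g * monomial ρ θ 0 0 r ∈ I := h2 g hgI _
    have e1 : g * monomial ρ θ 0 0 r
        = monomial ρ θ l 0 ((ρ ^ l) r) - monomial ρ θ 0 0 ((lam : R) * r) := by
      rw [hg, sub_mul, monomial_mul_monomial, monomial_mul_monomial]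
      simp [σ_x_apply, σ_zero_apply]
    have h1' : monomial ρ θ 0 0 ((ρ ^ l) r) * g ∈ I := Ideal.mul_mem_left _ _ hgI
    have e2 : monomial ρ θ 0 0 ((ρ ^ l) r) * g
        = monomial ρ θ l 0 ((ρ ^ l) r) - monomial ρ θ 0 0 ((ρ ^ l) r * (lam : R)) := by
      rw [prodg]
      simp [SkewBivar.σ, one_apply']
    have h3 : monomial ρ θ 0 0 ((lam : R) * r - (ρ ^ l) r * (lam : R)) ∈ I := by
      have := I.sub_mem h1' h1
      rw [e1, e2] at this
      erw [sub_sub_sub_cancel_left, monomial_sub] at this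
      exact this
    have h4 := const_eq_zero_of_mem hl _ h3
    have : (lam : R) * r - (ρ ^ l) r * (lam : R) = 0 := h4
    linear_combination -this
  have hrho : ρ ^ l = 1 := by
    apply DFunLike.ext
    intro r
    have := key r
    rw [mul_comm ((lam : R)) r] at this
    exact (Units.mul_left_inj lam).mp this
  refine ⟨hrho, ?_⟩
  -- `ρ(λ) = λ`
  have h1 : g * monomial ρ θ 1 0 1 ∈ I := h2 g hgI _
  have e1 : g * monomial ρ θ 1 0 1
      = monomial ρ θ (1 + l) 0 1 - monomial ρ θ 1 0 (lam : R) := by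
    rw [hg, sub_mul, monomial_mul_monomial, monomial_mul_monomial]
    simp [σ_x_apply, σ_zero_apply, add_comm l 1]
  have h1' : monomial ρ θ 1 0 1 * g ∈ I := Ideal.mul_mem_left _ _ hgI
  have e2 : monomial ρ θ 1 0 1 * g
      = monomial ρ θ (1 + l) 0 1 - monomial ρ θ 1 0 (ρ (lam : R)) := by
    rw [prodg]
    simp [σ_x_apply, one_apply']
  have h3 : monomial ρ θ 1 0 (ρ (lam : R) - (lam : R)) ∈ I := by
    have := I.sub_mem h1 h1'
    rw [e1, e2] at this
    erw [sub_sub_sub_cancel_left, monomial_sub] at this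
    exact this
  set c : R := ρ (lam : R) - (lam : R) with hc
  have h4 : monomial ρ θ l 0 ((ρ ^ (l - 1)) c) ∈ I := by
    have := Ideal.mul_mem_left _ (monomial ρ θ (l - 1) 0 1) h3
    rw [monomial_mul_monomial, σ_x_apply, one_mul] at this
    have hl1 : l - 1 + 1 = l := Nat.succ_pred_eq_of_pos hl
    rwa [hl1, add_zero] at this
  have h5 : monomial ρ θ 0 0 ((ρ ^ (l - 1)) c) * g ∈ I := Ideal.mul_mem_left _ _ hgI
  have e5 : monomial ρ θ 0 0 ((ρ ^ (l - 1)) c) * g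
      = monomial ρ θ l 0 ((ρ ^ (l - 1)) c)
        - monomial ρ θ 0 0 ((ρ ^ (l - 1)) c * (lam : R)) := by
    rw [prodg]
    simp [SkewBivar.σ, one_apply']
  have h6 : monomial ρ θ 0 0 ((ρ ^ (l - 1)) c * (lam : R)) ∈ I := by
    have := I.sub_mem h4 h5
    rw [e5] at this
    erw [sub_sub_cancel] at this
    exact this
  have h7 : (ρ ^ (l - 1)) c * (lam : R) = 0 := const_eq_zero_of_mem hl _ h6
  have h8 : (ρ ^ (l - 1)) c = 0 := by
    have := congrArg (fun x => x * ((lam⁻¹ : Rˣ) : R)) h7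
    simpa [mul_assoc] using this
  have h9 : c = 0 := by
    have : (ρ ^ (l - 1)) c = (ρ ^ (l - 1)) 0 := by simpa using h8
    exact (ρ ^ (l - 1)).injective this
  exact sub_eq_zero.mp h9
end

section
/- Let f1(x,y), f2(x,y) ∈ R[x,y;ρ,θ] be nonzero bivariate skew polynomials with f2 monic and deg f1 ≥ deg f2 (componentwise). Then there exist h(x,y) ≠ 0 and g(x,y) in R[x,y;ρ,θ] with f1 = h ⋆ f2 + g, where either g = 0, or both deg f2 ≰ deg g (componentwise) and deg f1 → deg g (strictly in the lexicographic order). -/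
open Finsupp

namespace SkewPoly

open SkewBivar

variable {R : Type*} [CommRing R] {ρ θ : RingAut R}

theorem coeff_add [Fact (Commute ρ θ)] (f g : SkewPoly R ρ θ) (p : ℕ × ℕ) :
    coeff (f + g) p = coeff f p + coeff g p := rfl

theorem coeff_zero [Fact (Commute ρ θ)] (p : ℕ × ℕ) :
    coeff (0 : SkewPoly R ρ θ) p = 0 := rfl

theorem coeff_monomial (i j : ℕ) (a : R) (p : ℕ × ℕ) :
    coeff (monomial ρ θ i j a) p = if ((i, j) : ℕ × ℕ) = p then a else 0 :=
  Finsupp.single_apply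

theorem coeff_monomial_mul [Fact (Commute ρ θ)] (i j : ℕ) (c : R) (f : SkewPoly R ρ θ)
    (p q : ℕ) :
    coeff (monomial ρ θ i j c * f) (p, q) =
      if i ≤ p ∧ j ≤ q then c * σ ρ θ (i, j) (coeff f (p - i, q - j)) else 0 := by
  rw [mul_def]
  show skmul ρ θ (Finsupp.single (i, j) c) f (p, q) = _
  unfold skmul
  rw [Finsupp.sum_single_index (by simp; exact Finset.sum_const_zero)]
  erw [Finsupp.sum_apply]
  erw [Finsupp.sum]
  split_ifs with hle
  · rw [Finset.sum_eq_single ((p - i, q - j) : ℕ × ℕ)]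
    · have he : ((i, j) : ℕ × ℕ) + (p - i, q - j) = (p, q) := by
        ext <;> simp <;> omega
      rw [he, Finsupp.single_eq_same]
      rfl
    · intro b _ hb
      apply Finsupp.single_eq_of_ne
      intro hc
      apply hb
      have h1 : i + b.1 = p := (congrArg Prod.fst hc).symm
      have h2 : j + b.2 = q := (congrArg Prod.snd hc).symm
      ext <;> simp <;> omega
    · intro hns
      rw [Finsupp.notMem_support_iff.mp hns, map_zero, mul_zero, Finsupp.single_zero, Finsupp.coe_zero, Pi.zero_apply]
  · apply Finset.sum_eq_zero
    intro b _
    apply Finsupp.single_eq_of_ne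
    intro hc
    have h1 : i + b.1 = p := (congrArg Prod.fst hc).symm
    have h2 : j + b.2 = q := (congrArg Prod.snd hc).symm
    omega

theorem hasQuasiDeg_monomial (i j : ℕ) {a : R} (ha : a ≠ 0) :
    HasQuasiDeg (monomial ρ θ i j a) i j := by
  constructor
  · rw [coeff_monomial, if_pos rfl]; exact ha
  · intro p q hpq
    rw [coeff_monomial, if_neg]
    intro hc
    have h1 : i = p := congrArg Prod.fst hc
    have h2 : j = q := congrArg Prod.snd hc
    omega

theorem exists_hasQuasiDeg (f : SkewPoly R ρ θ) (hf : f ≠ 0) :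
    ∃ k t : ℕ, HasQuasiDeg f k t := by
  have hne : (show (ℕ × ℕ) →₀ R from f).support.Nonempty :=
    Finsupp.support_nonempty_iff.mpr hf
  obtain ⟨b, hb, hmax⟩ := Finset.exists_max_image _
    (fun p : ℕ × ℕ => toLex (p.2, p.1)) hne
  refine ⟨b.1, b.2, ?_, ?_⟩
  · exact Finsupp.mem_support_iff.mp hb
  · intro i j hij
    by_contra hc
    have hmem : ((i, j) : ℕ × ℕ) ∈ (show (ℕ × ℕ) →₀ R from f).support :=
      Finsupp.mem_support_iff.mpr hc
    have hle := hmax _ hmem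
    rw [Prod.Lex.le_iff] at hle
    simp only [ofLex_toLex] at hle
    omega

theorem div_aux (ρ θ : RingAut R) [Fact (Commute ρ θ)] :
    ∀ t₁ k₁ : ℕ, ∀ f₁ f₂ : SkewPoly R ρ θ, ∀ k₂ t₂ : ℕ,
      HasQuasiDeg f₁ k₁ t₁ → HasQuasiDeg f₂ k₂ t₂ → coeff f₂ (k₂, t₂) = 1 →
      k₂ ≤ k₁ → t₂ ≤ t₁ →
      ∃ h g : SkewPoly R ρ θ, HasQuasiDeg h (k₁ - k₂) (t₁ - t₂) ∧ f₁ = h * f₂ + g ∧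
        (g = 0 ∨ ∃ kg tg : ℕ, HasQuasiDeg g kg tg ∧ ¬(k₂ ≤ kg ∧ t₂ ≤ tg) ∧
          (tg < t₁ ∨ (tg = t₁ ∧ kg < k₁))) := by
  intro t₁
  induction t₁ using Nat.strong_induction_on with
  | _ t₁ iht =>
  intro k₁
  induction k₁ using Nat.strong_induction_on with
  | _ k₁ ihk =>
  intro f₁ f₂ k₂ t₂ hd₁ hd₂ hm hk ht
  set a := coeff f₁ (k₁, t₁) with ha
  have ha0 : a ≠ 0 := hd₁.1
  set h₀ : SkewPoly R ρ θ := monomial ρ θ (k₁ - k₂) (t₁ - t₂) a with hh₀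
  set r : SkewPoly R ρ θ := f₁ - h₀ * f₂ with hr
  have hf₁ : f₁ = h₀ * f₂ + r := by rw [hr]; abel
  have hqh₀ : HasQuasiDeg h₀ (k₁ - k₂) (t₁ - t₂) := hasQuasiDeg_monomial _ _ ha0
  have hrA : ∀ p q : ℕ, (t₁ < q ∨ (q = t₁ ∧ k₁ < p)) → coeff r (p, q) = 0 := by
    intro p q hpq
    rw [hr, coeff_sub, hd₁.2 p q hpq, coeff_monomial_mul]
    split_ifs with hle
    · rw [hd₂.2 _ _ (by omega), map_zero, mul_zero, sub_zero]
    · rw [sub_zero]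
  have hrB : coeff r (k₁, t₁) = 0 := by
    rw [hr, coeff_sub, coeff_monomial_mul, if_pos ⟨by omega, by omega⟩,
      show k₁ - (k₁ - k₂) = k₂ by omega, show t₁ - (t₁ - t₂) = t₂ by omega,
      hm, map_one, mul_one, ← ha, sub_self]
  by_cases hr0 : r = 0
  · exact ⟨h₀, r, hqh₀, hf₁, Or.inl hr0⟩
  obtain ⟨kg, tg, hqg⟩ := exists_hasQuasiDeg r hr0
  have hlex : tg < t₁ ∨ (tg = t₁ ∧ kg < k₁) := by
    have h1 : ¬(t₁ < tg ∨ (tg = t₁ ∧ k₁ < kg)) := fun hc => hqg.1 (hrA kg tg hc)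
    have h2 : ¬(kg = k₁ ∧ tg = t₁) := fun hc => hqg.1 (by rw [hc.1, hc.2]; exact hrB)
    omega
  by_cases hge : k₂ ≤ kg ∧ t₂ ≤ tg
  · have H : ∃ h' g' : SkewPoly R ρ θ, HasQuasiDeg h' (kg - k₂) (tg - t₂) ∧
        r = h' * f₂ + g' ∧
        (g' = 0 ∨ ∃ kg' tg' : ℕ, HasQuasiDeg g' kg' tg' ∧ ¬(k₂ ≤ kg' ∧ t₂ ≤ tg') ∧
          (tg' < tg ∨ (tg' = tg ∧ kg' < kg))) := by
      rcases hlex with h | ⟨he, hkk⟩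
      · exact iht tg h kg r f₂ k₂ t₂ hqg hd₂ hm hge.1 hge.2
      · subst he
        exact ihk kg hkk r f₂ k₂ t₂ hqg hd₂ hm hge.1 hge.2
    obtain ⟨h', g', hqh', hre, hg'⟩ := H
    refine ⟨h₀ + h', g', ⟨?_, ?_⟩, by rw [hf₁, hre, add_mul]; abel, ?_⟩
    · rw [coeff_add, hqh'.2 _ _ (by omega), add_zero, hh₀, coeff_monomial, if_pos rfl]
      exact ha0
    · intro i j hij
      rw [coeff_add, hqh₀.2 i j hij, hqh'.2 i j (by omega), add_zero]
    · rcases hg' with h | ⟨kg', tg', hq', hng', hlex'⟩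
      · exact Or.inl h
      · exact Or.inr ⟨kg', tg', hq', hng', by omega⟩
  · exact ⟨h₀, r, hqh₀, hf₁, Or.inr ⟨kg, tg, hqg, hge, hlex⟩⟩

end SkewPoly

open SkewPoly in
/-- **Division algorithm** in `R[x,y;ρ,θ]`: if `f₂` is monic and `deg f₁ ≥ deg f₂`
componentwise, then `f₁ = h ⋆ f₂ + g` with `h ≠ 0` and either `g = 0`, or
`deg f₂ ≰ deg g` componentwise and `deg f₁ → deg g` in the lexicographic order. -/
theorem SkewPoly.div_algorithm
    {R : Type*} [CommRing R] (ρ θ : RingAut R) [Fact (Commute ρ θ)]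
    (f₁ f₂ : SkewPoly R ρ θ) (k₁ t₁ k₂ t₂ : ℕ)
    (hd₁ : HasQuasiDeg f₁ k₁ t₁) (hd₂ : HasQuasiDeg f₂ k₂ t₂)
    (hm : coeff f₂ (k₂, t₂) = 1) (hk : k₂ ≤ k₁) (ht : t₂ ≤ t₁) :
    ∃ h g : SkewPoly R ρ θ, h ≠ 0 ∧ f₁ = h * f₂ + g ∧
      (g = 0 ∨ ∃ kg tg : ℕ, HasQuasiDeg g kg tg ∧ ¬(k₂ ≤ kg ∧ t₂ ≤ tg) ∧
        (tg < t₁ ∨ (tg = t₁ ∧ kg < k₁))) := by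
  obtain ⟨h, g, hq, he, hc⟩ := SkewPoly.div_aux ρ θ t₁ k₁ f₁ f₂ k₂ t₂ hd₁ hd₂ hm hk ht
  refine ⟨h, g, fun h0 => hq.1 ?_, he, hc⟩
  rw [h0]
  rfl
end

section
/- Let l, s be positive integers with ρ^l = id_R and θ^s = id_R, and let λ1, λ2 be units in R with ρ(λ1) = λ1 and θ(λ2) = λ2. If C is a 2-D skew (λ1,λ2)-constacyclic code of length ls over R, then its dual code C^⊥ is a 2-D skew (λ1^{−1}, λ2^{−1})-constacyclic code. -/
open Finsupp

namespace SkewCode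

variable {R : Type*} [CommRing R] {l s : ℕ}

/-- The column skew `λ₁`-constacyclic shift of an `l × s` array. -/
def colShift (ρ : RingAut R) (lam : R) (c : Matrix (Fin l) (Fin s) R) :
    Matrix (Fin l) (Fin s) R :=
  Matrix.of fun i j =>
    if (i : ℕ) = 0 then lam * ρ (c ⟨l - 1, Nat.sub_lt i.pos Nat.one_pos⟩ j)
    else ρ (c ⟨(i : ℕ) - 1, lt_of_le_of_lt (Nat.sub_le _ _) i.isLt⟩ j)

/-- The row skew `λ₂`-constacyclic shift of an `l × s` array. -/
def rowShift (θ : RingAut R) (lam : R) (c : Matrix (Fin l) (Fin s) R) :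
    Matrix (Fin l) (Fin s) R :=
  Matrix.of fun i j =>
    if (j : ℕ) = 0 then lam * θ (c i ⟨s - 1, Nat.sub_lt j.pos Nat.one_pos⟩)
    else θ (c i ⟨(j : ℕ) - 1, lt_of_le_of_lt (Nat.sub_le _ _) j.isLt⟩)

/-- A set of arrays is column skew `λ₁`-constacyclic if it is closed under the column shift. -/
def IsColConstacyclic (ρ : RingAut R) (lam : R) (C : Set (Matrix (Fin l) (Fin s) R)) : Prop :=
  ∀ c ∈ C, colShift ρ lam c ∈ C

/-- A set of arrays is row skew `λ₂`-constacyclic if it is closed under the row shift. -/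
def IsRowConstacyclic (θ : RingAut R) (lam : R) (C : Set (Matrix (Fin l) (Fin s) R)) : Prop :=
  ∀ c ∈ C, rowShift θ lam c ∈ C

/-- A 2-D skew `(λ₁,λ₂)`-constacyclic code: closed under both shifts. -/
def Is2DSkewConstacyclic (ρ θ : RingAut R) (lam₁ lam₂ : R)
    (C : Set (Matrix (Fin l) (Fin s) R)) : Prop :=
  IsColConstacyclic ρ lam₁ C ∧ IsRowConstacyclic θ lam₂ C

/-- The bivariate skew polynomial `Σ_j Σ_i c_{i,j} x^i y^j` attached to an `l × s` array. -/
noncomputable def toPoly (ρ θ : RingAut R) (c : Matrix (Fin l) (Fin s) R) :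
    SkewPoly R ρ θ :=
  ∑ i : Fin l, ∑ j : Fin s, SkewPoly.monomial ρ θ (i : ℕ) (j : ℕ) (c i j)

/-- The left ideal `⟨x^l − λ₁, y^s − λ₂⟩_l` of `R[x,y;ρ,θ]`. -/
noncomputable def codeIdeal (ρ θ : RingAut R) [Fact (Commute ρ θ)] (l s : ℕ) (lam₁ lam₂ : R) :
    Ideal (SkewPoly R ρ θ) :=
  Ideal.span {SkewPoly.monomial ρ θ l 0 1 - SkewPoly.monomial ρ θ 0 0 lam₁,
    SkewPoly.monomial ρ θ 0 s 1 - SkewPoly.monomial ρ θ 0 0 lam₂}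

/-- The identification of an array with its class in `R° = R[x,y;ρ,θ]/⟨x^l−λ₁,y^s−λ₂⟩_l`. -/
noncomputable def toQuot (ρ θ : RingAut R) [Fact (Commute ρ θ)] (lam₁ lam₂ : R)
    (c : Matrix (Fin l) (Fin s) R) :
    SkewPoly R ρ θ ⧸ codeIdeal ρ θ l s lam₁ lam₂ :=
  @Submodule.Quotient.mk _ _ _ Ring.toAddCommGroup Semiring.toModule (codeIdeal ρ θ l s lam₁ lam₂)
    (toPoly ρ θ c)

/-- The dual code, with respect to the inner product `c ⊙ d = Σ_{i,j} c_{i,j} d_{i,j}`. -/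
def dualCode (C : Set (Matrix (Fin l) (Fin s) R)) : Set (Matrix (Fin l) (Fin s) R) :=
  {d | ∀ c ∈ C, (∑ i : Fin l, ∑ j : Fin s, c i j * d i j) = 0}

end SkewCode

namespace SkewCode

variable {R : Type*} [CommRing R] {l s : ℕ}


lemma aux_one_apply (x : R) : (1 : RingAut R) x = x := rfl

lemma aux_pow_apply (ρ : RingAut R) (n : ℕ) (x : R) :
    (ρ ^ (n+1) : RingAut R) x = ρ ((ρ^n : RingAut R) x) := by
  rw [pow_succ']; rfl

lemma aux_pow_fix (ρ : RingAut R) (lam : R) (hfix : ρ lam = lam) (k : ℕ) :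
    (ρ ^ k : RingAut R) lam = lam := by
  induction k with
  | zero => rfl
  | succ n ih => rw [aux_pow_apply, ih, hfix]

lemma aux_fix_inv (ρ : RingAut R) (lam : Rˣ) (hfix : ρ (lam:R) = lam) :
    ρ ((lam⁻¹:Rˣ):R) = ((lam⁻¹:Rˣ):R) := by
  have h : ρ ((lam⁻¹:Rˣ):R) * (lam:R) = 1 := by
    rw [← hfix, ← map_mul]; simp
  calc ρ ((lam⁻¹:Rˣ):R) = ρ ((lam⁻¹:Rˣ):R) * ((lam:R) * ((lam⁻¹:Rˣ):R)) := by simp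
    _ = _ := by rw [← mul_assoc, h, one_mul]

lemma colShift_smul (ρ : RingAut R) (lam a : R) (c : Matrix (Fin l) (Fin s) R) :
    colShift ρ lam (a • c) = ρ a • colShift ρ lam c := by
  ext i j
  by_cases h : (i:ℕ) = 0 <;>
    simp only [colShift, h, Matrix.of_apply, Matrix.smul_apply, if_true, if_false,
      map_mul, smul_eq_mul] <;> ring

lemma colShift_iterate (ρ : RingAut R) (lam : R) (hfix : ρ lam = lam) :
    ∀ k, k ≤ l → ∀ (c : Matrix (Fin l) (Fin s) R) (i : Fin l) (j : Fin s),
      ((colShift ρ lam)^[k] c) i j =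
        if h : (i : ℕ) < k
        then lam * (ρ ^ k : RingAut R) (c ⟨(i : ℕ) + l - k, by have := i.isLt; omega⟩ j)
        else (ρ ^ k : RingAut R) (c ⟨(i : ℕ) - k, by have := i.isLt; omega⟩ j) := by
  intro k
  induction k with
  | zero =>
    intro _ c i j
    simp [Fin.eta, aux_one_apply]
  | succ n ih =>
    intro hk c i j
    rw [Function.iterate_succ_apply']
    have hn : n ≤ l := by omega
    show colShift ρ lam ((colShift ρ lam)^[n] c) i j = _
    have hil := i.isLt
    by_cases h0 : (i:ℕ) = 0
    · simp only [colShift, Matrix.of_apply, h0, if_true]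
      rw [ih hn]
      have hnl : ¬ ((⟨l - 1, by omega⟩ : Fin l) : ℕ) < n := by simp; omega
      rw [dif_neg hnl, dif_pos (Nat.succ_pos n), ← aux_pow_apply]
      congr 2
      exact congrFun (congrArg c (Fin.ext (by first | omega | (simp; omega)))) j
    · simp only [colShift, Matrix.of_apply, h0, if_false]
      rw [ih hn]
      by_cases h1 : ((⟨(i:ℕ) - 1, by omega⟩ : Fin l) : ℕ) < n
      · rw [dif_pos h1, dif_pos (by simp at h1; omega : (i:ℕ) < n + 1),
          map_mul, hfix, ← aux_pow_apply]
        congr 3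
        exact Fin.ext (by first | omega | (simp; omega) | simp)
      · rw [dif_neg h1, dif_neg (by simp at h1; omega : ¬ (i:ℕ) < n + 1), ← aux_pow_apply]
        congr 2
        exact Fin.ext (by first | omega | (simp; omega) | simp)

lemma colShift_iterate_l (ρ : RingAut R) (lam : R) (hfix : ρ lam = lam)
    (hρ : ρ ^ l = 1) (c : Matrix (Fin l) (Fin s) R) :
    (colShift ρ lam)^[l] c = lam • c := by
  ext i j
  rw [colShift_iterate ρ lam hfix l le_rfl, dif_pos i.isLt, hρ]
  simp [Fin.eta, aux_one_apply]

def prevEquiv (hl : 0 < l) : Equiv (Fin l) (Fin l) where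
  toFun i := if _ : (i:ℕ) = 0 then ⟨l-1, by omega⟩
             else ⟨(i:ℕ)-1, by have := i.isLt; omega⟩
  invFun i := if _ : (i:ℕ) = l-1 then ⟨0, hl⟩
              else ⟨(i:ℕ)+1, by have := i.isLt; omega⟩
  left_inv i := by
    dsimp only
    have hi := i.isLt
    by_cases h : (i:ℕ) = 0
    · rw [dif_pos h, dif_pos (by first | omega | (simp; omega) | simp)]
      exact Fin.ext (by first | omega | (simp; omega) | simp)
    · rw [dif_neg h, dif_neg (by first | omega | (simp; omega) | simp)]
      exact Fin.ext (by first | omega | (simp; omega) | simp)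
  right_inv i := by
    dsimp only
    have hi := i.isLt
    by_cases h : (i:ℕ) = l - 1
    · rw [dif_pos h, dif_pos (by first | omega | (simp; omega) | simp)]
      exact Fin.ext (by first | omega | (simp; omega) | simp)
    · rw [dif_neg h, dif_neg (by first | omega | (simp; omega) | simp)]
      exact Fin.ext (by first | omega | (simp; omega) | simp)

lemma pairing_colShift (ρ : RingAut R) (lam : Rˣ) (hl : 0 < l)
    (c d : Matrix (Fin l) (Fin s) R) :
    (∑ i : Fin l, ∑ j : Fin s,
        colShift ρ (lam:R) c i j * colShift ρ ((lam⁻¹:Rˣ):R) d i j)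
      = ρ (∑ i : Fin l, ∑ j : Fin s, c i j * d i j) := by
  rw [map_sum]
  rw [← Equiv.sum_comp (prevEquiv hl) (fun i => ρ (∑ j : Fin s, c i j * d i j))]
  refine Finset.sum_congr rfl fun i _ => ?_
  rw [map_sum]
  refine Finset.sum_congr rfl fun j _ => ?_
  rw [map_mul]
  by_cases h : (i:ℕ) = 0
  · simp only [colShift, prevEquiv, Matrix.of_apply, Equiv.coe_fn_mk, h, if_true, dif_pos]
    rw [mul_mul_mul_comm, show (lam:R) * ((lam⁻¹:Rˣ):R) = 1 by simp, one_mul]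
  · simp only [colShift, prevEquiv, Matrix.of_apply, Equiv.coe_fn_mk, h, if_false, dif_neg,
      not_false_iff]

lemma mem_iterate (ρ : RingAut R) (lam : R) (C : Submodule R (Matrix (Fin l) (Fin s) R))
    (hC : IsColConstacyclic ρ lam (C : Set (Matrix (Fin l) (Fin s) R))) (k : ℕ) {c}
    (hc : c ∈ C) : (colShift ρ lam)^[k] c ∈ C := by
  induction k with
  | zero => exact hc
  | succ n ih => rw [Function.iterate_succ_apply']; exact hC _ ih

lemma dual_colConstacyclic (ρ : RingAut R) (hl : 0 < l) (hρ : ρ ^ l = 1) (lam : Rˣ)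
    (hfix : ρ (lam:R) = lam)
    (C : Submodule R (Matrix (Fin l) (Fin s) R))
    (hC : IsColConstacyclic ρ (lam:R) (C : Set (Matrix (Fin l) (Fin s) R))) :
    IsColConstacyclic ρ ((lam⁻¹:Rˣ):R) (dualCode (C : Set (Matrix (Fin l) (Fin s) R))) := by
  intro d hd c hcC
  set c' : Matrix (Fin l) (Fin s) R :=
    ((lam⁻¹:Rˣ):R) • (colShift ρ (lam:R))^[l-1] c with hc'def
  have hc'mem : c' ∈ C := Submodule.smul_mem _ _ (mem_iterate ρ _ C hC _ hcC)
  have hcc : colShift ρ (lam:R) c' = c := by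
    rw [hc'def, colShift_smul, aux_fix_inv ρ lam hfix,
      ← Function.iterate_succ_apply' (colShift ρ (lam:R)) (l-1) c,
      show (l-1).succ = l by omega, colShift_iterate_l ρ _ hfix hρ, smul_smul]
    simp
  calc (∑ i : Fin l, ∑ j : Fin s, c i j * colShift ρ ((lam⁻¹:Rˣ):R) d i j)
      = ∑ i : Fin l, ∑ j : Fin s,
          colShift ρ (lam:R) c' i j * colShift ρ ((lam⁻¹:Rˣ):R) d i j := by rw [hcc]
    _ = ρ (∑ i : Fin l, ∑ j : Fin s, c' i j * d i j) := pairing_colShift ρ lam hl c' d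
    _ = 0 := by rw [hd c' hc'mem, map_zero]




lemma rowShift_smul (θ : RingAut R) (lam a : R) (c : Matrix (Fin l) (Fin s) R) :
    rowShift θ lam (a • c) = θ a • rowShift θ lam c := by
  ext i j
  by_cases h : (j:ℕ) = 0 <;>
    simp only [rowShift, h, Matrix.of_apply, Matrix.smul_apply, if_true, if_false,
      map_mul, smul_eq_mul] <;> ring

lemma rowShift_iterate (θ : RingAut R) (lam : R) (hfix : θ lam = lam) :
    ∀ k, k ≤ s → ∀ (c : Matrix (Fin l) (Fin s) R) (i : Fin l) (j : Fin s),
      ((rowShift θ lam)^[k] c) i j =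
        if h : (j : ℕ) < k
        then lam * (θ ^ k : RingAut R) (c i ⟨(j : ℕ) + s - k, by have := j.isLt; omega⟩)
        else (θ ^ k : RingAut R) (c i ⟨(j : ℕ) - k, by have := j.isLt; omega⟩) := by
  intro k
  induction k with
  | zero =>
    intro _ c i j
    simp [Fin.eta, aux_one_apply]
  | succ n ih =>
    intro hk c i j
    rw [Function.iterate_succ_apply']
    have hn : n ≤ s := by omega
    show rowShift θ lam ((rowShift θ lam)^[n] c) i j = _
    have hjl := j.isLt
    by_cases h0 : (j:ℕ) = 0
    · simp only [rowShift, Matrix.of_apply, h0, if_true]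
      rw [ih hn]
      have hnl : ¬ ((⟨s - 1, by omega⟩ : Fin s) : ℕ) < n := by simp; omega
      rw [dif_neg hnl, dif_pos (Nat.succ_pos n), ← aux_pow_apply]
      congr 2
      exact congrArg (c i) (Fin.ext (by first | omega | (simp; omega)))
    · simp only [rowShift, Matrix.of_apply, h0, if_false]
      rw [ih hn]
      by_cases h1 : ((⟨(j:ℕ) - 1, by omega⟩ : Fin s) : ℕ) < n
      · rw [dif_pos h1, dif_pos (by simp at h1; omega : (j:ℕ) < n + 1),
          map_mul, hfix, ← aux_pow_apply]
        congr 3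
        first
        | exact congrArg (c i) (Fin.ext (by first | omega | (simp; omega)))
        | exact Fin.ext (by first | omega | (simp; omega))
      · rw [dif_neg h1, dif_neg (by simp at h1; omega : ¬ (j:ℕ) < n + 1), ← aux_pow_apply]
        congr 2
        first
        | exact congrArg (c i) (Fin.ext (by first | omega | (simp; omega)))
        | exact Fin.ext (by first | omega | (simp; omega))

lemma rowShift_iterate_s (θ : RingAut R) (lam : R) (hfix : θ lam = lam)
    (hθ : θ ^ s = 1) (c : Matrix (Fin l) (Fin s) R) :
    (rowShift θ lam)^[s] c = lam • c := by
  ext i j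
  rw [rowShift_iterate θ lam hfix s le_rfl, dif_pos j.isLt, hθ]
  simp [Fin.eta, aux_one_apply]

lemma pairing_rowShift (θ : RingAut R) (lam : Rˣ) (hs : 0 < s)
    (c d : Matrix (Fin l) (Fin s) R) :
    (∑ i : Fin l, ∑ j : Fin s,
        rowShift θ (lam:R) c i j * rowShift θ ((lam⁻¹:Rˣ):R) d i j)
      = θ (∑ i : Fin l, ∑ j : Fin s, c i j * d i j) := by
  rw [map_sum]
  refine Finset.sum_congr rfl fun i _ => ?_
  rw [map_sum]
  rw [← Equiv.sum_comp (prevEquiv hs) (fun j => θ (c i j * d i j))]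
  refine Finset.sum_congr rfl fun j _ => ?_
  rw [map_mul]
  by_cases h : (j:ℕ) = 0
  · simp only [rowShift, prevEquiv, Matrix.of_apply, Equiv.coe_fn_mk, h, if_true, dif_pos]
    rw [mul_mul_mul_comm, show (lam:R) * ((lam⁻¹:Rˣ):R) = 1 by simp, one_mul]
  · simp only [rowShift, prevEquiv, Matrix.of_apply, Equiv.coe_fn_mk, h, if_false, dif_neg,
      not_false_iff]

lemma mem_iterate_row (θ : RingAut R) (lam : R) (C : Submodule R (Matrix (Fin l) (Fin s) R))
    (hC : IsRowConstacyclic θ lam (C : Set (Matrix (Fin l) (Fin s) R))) (k : ℕ) {c}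
    (hc : c ∈ C) : (rowShift θ lam)^[k] c ∈ C := by
  induction k with
  | zero => exact hc
  | succ n ih => rw [Function.iterate_succ_apply']; exact hC _ ih

lemma dual_rowConstacyclic (θ : RingAut R) (hs : 0 < s) (hθ : θ ^ s = 1) (lam : Rˣ)
    (hfix : θ (lam:R) = lam)
    (C : Submodule R (Matrix (Fin l) (Fin s) R))
    (hC : IsRowConstacyclic θ (lam:R) (C : Set (Matrix (Fin l) (Fin s) R))) :
    IsRowConstacyclic θ ((lam⁻¹:Rˣ):R) (dualCode (C : Set (Matrix (Fin l) (Fin s) R))) := by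
  intro d hd c hcC
  set c' : Matrix (Fin l) (Fin s) R :=
    ((lam⁻¹:Rˣ):R) • (rowShift θ (lam:R))^[s-1] c with hc'def
  have hc'mem : c' ∈ C := Submodule.smul_mem _ _ (mem_iterate_row θ _ C hC _ hcC)
  have hcc : rowShift θ (lam:R) c' = c := by
    rw [hc'def, rowShift_smul, aux_fix_inv θ lam hfix,
      ← Function.iterate_succ_apply' (rowShift θ (lam:R)) (s-1) c,
      show (s-1).succ = s by omega, rowShift_iterate_s θ _ hfix hθ, smul_smul]
    simp
  calc (∑ i : Fin l, ∑ j : Fin s, c i j * rowShift θ ((lam⁻¹:Rˣ):R) d i j)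
      = ∑ i : Fin l, ∑ j : Fin s,
          rowShift θ (lam:R) c' i j * rowShift θ ((lam⁻¹:Rˣ):R) d i j := by rw [hcc]
    _ = θ (∑ i : Fin l, ∑ j : Fin s, c' i j * d i j) := pairing_rowShift θ lam hs c' d
    _ = 0 := by rw [hd c' hc'mem, map_zero]


end SkewCode

open SkewCode in
/-- If `ρ^l = id`, `θ^s = id`, `λ₁, λ₂` are units fixed by `ρ` resp. `θ`, and `C` is a
2-D skew `(λ₁,λ₂)`-constacyclic code of length `ls`, then the dual code `C^⊥` is a
2-D skew `(λ₁⁻¹,λ₂⁻¹)`-constacyclic code. -/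
theorem SkewCode.dual_is2DSkewConstacyclic
    {R : Type*} [CommRing R] (ρ θ : RingAut R) (hc : Commute ρ θ)
    (l s : ℕ) (hl : 0 < l) (hs : 0 < s)
    (hρ : ρ ^ l = 1) (hθ : θ ^ s = 1) (lam₁ lam₂ : Rˣ)
    (hfix₁ : ρ (lam₁ : R) = (lam₁ : R)) (hfix₂ : θ (lam₂ : R) = (lam₂ : R))
    (C : Submodule R (Matrix (Fin l) (Fin s) R))
    (hC : Is2DSkewConstacyclic ρ θ (lam₁ : R) (lam₂ : R)
      (C : Set (Matrix (Fin l) (Fin s) R))) :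
    Is2DSkewConstacyclic ρ θ ((lam₁⁻¹ : Rˣ) : R) ((lam₂⁻¹ : Rˣ) : R)
      (dualCode (C : Set (Matrix (Fin l) (Fin s) R))) := by
  exact ⟨dual_colConstacyclic ρ hl hρ lam₁ hfix₁ C hC.1,
    dual_rowConstacyclic θ hs hθ lam₂ hfix₂ C hC.2⟩
end

section
/- Let l, s be positive integers with ρ^l = id_R and θ^s = id_R, and let λ1, λ2 ∈ R^{ρ,θ}. Let g(x,y) be a monic right divisor of (x^l − λ1) ⋆ (y^s − λ2) in R[x,y;ρ,θ], and let h(x,y) be the (monic) quotient, i.e., (x^l − λ1) ⋆ (y^s − λ2) = h(x,y) ⋆ g(x,y). Then for every f(x,y) ∈ R[x,y;ρ,θ], f(x,y) belongs to the left ideal ⟨g(x,y)⟩_l of R[x,y;ρ,θ] if and only if f(x,y) ⋆ h(x,y) belongs to the left ideal ⟨(x^l − λ1) ⋆ (y^s − λ2)⟩_l, i.e., f ⋆ h = 0 in R⋄ = R[x,y;ρ,θ]/⟨(x^l − λ1) ⋆ (y^s − λ2)⟩_l. -/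
open Finsupp

namespace SkewAux

open SkewBivar

variable {R : Type*} [CommRing R] (ρ θ : RingAut R)

theorem skmul_apply (f g : (ℕ × ℕ) →₀ R) (c : ℕ × ℕ) :
    skmul ρ θ f g c =
      f.sum fun a r => g.sum fun b s => if a + b = c then r * σ ρ θ a s else 0 := by
  unfold skmul
  simp only [Finsupp.sum_apply, Finsupp.single_apply]

theorem exists_max (S : Finset (ℕ × ℕ)) (hS : S.Nonempty) :
    ∃ m ∈ S, ∀ p ∈ S, p.2 < m.2 ∨ (p.2 = m.2 ∧ p.1 ≤ m.1) := by
  classical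
  have h1 : (S.image Prod.snd).Nonempty := hS.image _
  set t0 := (S.image Prod.snd).max' h1 with ht0
  have ht0mem : t0 ∈ S.image Prod.snd := Finset.max'_mem _ _
  obtain ⟨p0, hp0S, hp0⟩ := Finset.mem_image.1 ht0mem
  have h2 : ((S.filter fun p => p.2 = t0).image Prod.fst).Nonempty :=
    ⟨p0.1, Finset.mem_image.2 ⟨p0, Finset.mem_filter.2 ⟨hp0S, hp0⟩, rfl⟩⟩
  set k0 := ((S.filter fun p => p.2 = t0).image Prod.fst).max' h2 with hk0
  have hk0mem := Finset.max'_mem _ h2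
  obtain ⟨q0, hq0, hq0'⟩ := Finset.mem_image.1 hk0mem
  obtain ⟨hq0S, hq0t⟩ := Finset.mem_filter.1 hq0
  refine ⟨(k0, t0), ?_, ?_⟩
  · have : q0 = (k0, t0) := Prod.ext hq0' hq0t
    rwa [← this]
  · intro p hp
    have hle : p.2 ≤ t0 := Finset.le_max' _ _ (Finset.mem_image_of_mem _ hp)
    rcases lt_or_eq_of_le hle with hlt | heq
    · exact Or.inl hlt
    · exact Or.inr ⟨heq, Finset.le_max' _ _
        (Finset.mem_image_of_mem _ (Finset.mem_filter.2 ⟨hp, heq⟩))⟩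

theorem skmul_cancel (h : (ℕ × ℕ) →₀ R) (k t : ℕ)
    (hlead : h (k, t) = 1)
    (hdeg : ∀ i j : ℕ, (t < j ∨ (j = t ∧ k < i)) → h (i, j) = 0)
    (q : (ℕ × ℕ) →₀ R) (hq : skmul ρ θ q h = 0) : q = 0 := by
  by_contra hne
  obtain ⟨m, hmS, hmax⟩ := exists_max q.support (Finsupp.support_nonempty_iff.2 hne)
  have hmq : q m ≠ 0 := Finsupp.mem_support_iff.1 hmS
  have key : skmul ρ θ q h (m + (k, t)) = q m := by
    rw [skmul_apply, Finsupp.sum, Finset.sum_eq_single m]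
    · rw [Finsupp.sum, Finset.sum_eq_single (k, t)]
      · simp [hlead]
      · intro b _ hbne
        rw [if_neg]
        intro habc
        exact hbne (add_left_cancel habc)
      · intro hnot
        rw [Finsupp.notMem_support_iff.1 hnot]
        simp
    · intro a haS hane
      rw [Finsupp.sum]
      apply Finset.sum_eq_zero
      intro b hbS
      rw [if_neg]
      intro habc
      have hb : ¬ (t < b.2 ∨ (b.2 = t ∧ k < b.1)) := fun hcon =>
        Finsupp.mem_support_iff.1 hbS (hdeg b.1 b.2 hcon)
      have ha := hmax a haS
      have h1 : a.1 + b.1 = m.1 + k := by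
        have := congrArg Prod.fst habc; simpa using this
      have h2 : a.2 + b.2 = m.2 + t := by
        have := congrArg Prod.snd habc; simpa using this
      push_neg at hb
      exact hane (Prod.ext (by omega) (by omega))
    · intro hnot
      exact absurd hmS hnot
  rw [hq] at key
  exact hmq (by simpa using key.symm)

theorem pow_fix (ρ : RingAut R) (a : R) (hfix : ρ a = a) : ∀ i, (ρ ^ i) a = a := by
  intro i
  induction i with
  | zero => rfl
  | succ n ih => rw [pow_succ]; show (ρ ^ n) (ρ a) = a; rw [hfix, ih]

theorem σ_fix (c : R) (hc1 : ρ c = c) (hc2 : θ c = c) (p : ℕ × ℕ) :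
    σ ρ θ p c = c := by
  show (ρ ^ p.1) ((θ ^ p.2) c) = c
  rw [pow_fix θ c hc2, pow_fix ρ c hc1]

theorem single_central (a : ℕ × ℕ) (c : R)
    (h1 : σ ρ θ a = 1) (h2 : ∀ p : ℕ × ℕ, σ ρ θ p c = c)
    (f : (ℕ × ℕ) →₀ R) :
    skmul ρ θ (Finsupp.single a c) f = skmul ρ θ f (Finsupp.single a c) := by
  induction f using Finsupp.induction with
  | zero => rw [skmul_zero, zero_skmul]
  | single_add b s f' _ _ ih =>
    rw [skmul_add, add_skmul, ih, single_skmul_single, single_skmul_single,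
      add_comm a b]
    have hco : c * (σ ρ θ a) s = s * (σ ρ θ b) c := by
      rw [h1, h2 b]
      show c * s = s * c
      ring
    rw [hco]

end SkewAux

open SkewPoly in
/-- If `g` is a monic right divisor of `(x^l − λ₁) ⋆ (y^s − λ₂)` with monic quotient `h`,
then `f ∈ ⟨g⟩_l` iff `f ⋆ h = 0` in `R⋄ = R[x,y;ρ,θ]/⟨(x^l − λ₁) ⋆ (y^s − λ₂)⟩_l`. -/
theorem SkewPoly.mem_span_iff_mul_quotient
    {R : Type*} [CommRing R] (ρ θ : RingAut R) [Fact (Commute ρ θ)]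
    (l s : ℕ) (hl : 0 < l) (hs : 0 < s) (hρ : ρ ^ l = 1) (hθ : θ ^ s = 1)
    (lam₁ lam₂ : R) (h₁ρ : ρ lam₁ = lam₁) (h₁θ : θ lam₁ = lam₁)
    (h₂ρ : ρ lam₂ = lam₂) (h₂θ : θ lam₂ = lam₂)
    (g h : SkewPoly R ρ θ) (hgm : Monic g) (hhm : Monic h)
    (hfact : (monomial ρ θ l 0 1 - monomial ρ θ 0 0 lam₁) *
        (monomial ρ θ 0 s 1 - monomial ρ θ 0 0 lam₂) = h * g) :
    ∀ f : SkewPoly R ρ θ, f ∈ Ideal.span {g} ↔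
      f * h ∈ Ideal.span {(monomial ρ θ l 0 1 - monomial ρ θ 0 0 lam₁) *
        (monomial ρ θ 0 s 1 - monomial ρ θ 0 0 lam₂)} := by
  classical
  set P : SkewPoly R ρ θ := (monomial ρ θ l 0 1 - monomial ρ θ 0 0 lam₁) *
      (monomial ρ θ 0 s 1 - monomial ρ θ 0 0 lam₂) with hPdef
  -- cancellation by a monic polynomial on the right
  have hcanc : ∀ w : SkewPoly R ρ θ, Monic w → ∀ q : SkewPoly R ρ θ, q * w = 0 → q = 0 := by
    rintro w ⟨k, t, ⟨_, hdeg⟩, hone⟩ q hq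
    exact SkewAux.skmul_cancel ρ θ w k t hone hdeg q hq
  -- expansion of P
  have hPexp : P = monomial ρ θ l s 1 - monomial ρ θ l 0 lam₂
      - monomial ρ θ 0 s lam₁ + monomial ρ θ 0 0 (lam₁ * lam₂) := by
    rw [hPdef, sub_mul, mul_sub, mul_sub, monomial_mul_monomial, monomial_mul_monomial,
      monomial_mul_monomial, monomial_mul_monomial]
    have e1 : SkewBivar.σ ρ θ (l, 0) lam₂ = lam₂ := SkewAux.σ_fix ρ θ lam₂ h₂ρ h₂θ _
    have e2 : (SkewBivar.σ ρ θ (l, 0)) (1 : R) = 1 := map_one _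
    have e3 : (SkewBivar.σ ρ θ (0, 0)) (1 : R) = 1 := map_one _
    have e4 : SkewBivar.σ ρ θ (0, 0) lam₂ = lam₂ := SkewAux.σ_fix ρ θ lam₂ h₂ρ h₂θ _
    rw [e1, e2, e3, e4]
    simp only [add_zero, zero_add, one_mul, mul_one]
    abel
  -- P is central
  have hcen : ∀ f : SkewPoly R ρ θ, P * f = f * P := by
    have hA : ∀ f : SkewPoly R ρ θ, monomial ρ θ l s (1 : R) * f
        = f * monomial ρ θ l s (1 : R) := fun f =>
      SkewAux.single_central ρ θ (l, s) 1
        (by simp [SkewBivar.σ, hρ, hθ]) (fun p => map_one _) f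
    have hB : ∀ f : SkewPoly R ρ θ, monomial ρ θ l 0 lam₂ * f
        = f * monomial ρ θ l 0 lam₂ := fun f =>
      SkewAux.single_central ρ θ (l, 0) lam₂
        (by simp [SkewBivar.σ, hρ]) (SkewAux.σ_fix ρ θ lam₂ h₂ρ h₂θ) f
    have hC : ∀ f : SkewPoly R ρ θ, monomial ρ θ 0 s lam₁ * f
        = f * monomial ρ θ 0 s lam₁ := fun f =>
      SkewAux.single_central ρ θ (0, s) lam₁
        (by simp [SkewBivar.σ, hθ]) (SkewAux.σ_fix ρ θ lam₁ h₁ρ h₁θ) f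
    have hD : ∀ f : SkewPoly R ρ θ, monomial ρ θ 0 0 (lam₁ * lam₂) * f
        = f * monomial ρ θ 0 0 (lam₁ * lam₂) := fun f =>
      SkewAux.single_central ρ θ (0, 0) (lam₁ * lam₂)
        (by simp [SkewBivar.σ])
        (fun p => by rw [map_mul, SkewAux.σ_fix ρ θ lam₁ h₁ρ h₁θ,
          SkewAux.σ_fix ρ θ lam₂ h₂ρ h₂θ]) f
    intro f
    rw [hPexp]
    simp only [sub_mul, add_mul, mul_sub, mul_add]
    rw [hA, hB, hC, hD]
  -- g * h = h * g
  have hgh : h * g = g * h := by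
    have h1 := hcen g
    rw [hfact] at h1
    have h2 : (h * g - g * h) * g = 0 := by
      rw [sub_mul, h1, mul_assoc, sub_self]
    exact sub_eq_zero.mp (hcanc g hgm _ h2)
  intro f
  constructor
  · intro hf
    obtain ⟨a, ha⟩ := Submodule.mem_span_singleton.1 hf
    rw [smul_eq_mul] at ha
    refine Submodule.mem_span_singleton.2 ⟨a, ?_⟩
    rw [smul_eq_mul, hfact, hgh, ← mul_assoc, ha]
  · intro hf
    obtain ⟨b, hb⟩ := Submodule.mem_span_singleton.1 hf
    rw [smul_eq_mul, hfact, hgh, ← mul_assoc] at hb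
    have h2 : (f - b * g) * h = 0 := by rw [sub_mul, hb, sub_self]
    have h4 := sub_eq_zero.mp (hcanc h hhm _ h2)
    exact Submodule.mem_span_singleton.2 ⟨b, by rw [smul_eq_mul, ← h4]⟩
end
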